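/- arXiv:1908.03836 — 2 statements merged into one kernel-verified Lean document; each statement's English description precedes it below -/
import Mathlib

section
/- The function f(s) = (1-s)·exp(s/(1-s)) + s·exp((1-s)/s) defined on (0,1) satisfies: for any 0 < u < 1/2, sup over s ∈ (u, 1-u) of f(s) is at most (1-u)·exp(u/(1-u)) + u·exp((1-u)/u). -/
/-!
With `a = s / (1 - s)` the derivative of `f = bernoulliMomentFun` is `a e^a - a⁻¹ e^(a⁻¹)`. Since `x ↦ x e^x` is
increasing on `[0, ∞)` and `a ≤ 1 ≤ a⁻¹` for `s ≤ 1/2`, `f` is antitone on `(0, 1/2]`. By the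
symmetry `f (1 - s) = f s`, every `s ∈ (u, 1 - u)` has the same value as `min s (1 - s) ∈ [u, 1/2]`.
-/

open Real Set

theorem mul_exp_le_mul_exp {a b : ℝ} (ha : 0 ≤ a) (hab : a ≤ b) :
    a * exp a ≤ b * exp b :=
  mul_le_mul hab (exp_le_exp.mpr hab) (exp_pos a).le (ha.trans hab)

noncomputable def bernoulliMomentFun (s : ℝ) : ℝ :=
  (1 - s) * exp (s / (1 - s)) + s * exp ((1 - s) / s)

namespace bernoulliMomentFun

theorem one_sub (s : ℝ) : bernoulliMomentFun (1 - s) = bernoulliMomentFun s := by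
  simp only [bernoulliMomentFun, sub_sub_cancel]
  ring

theorem hasDerivAt {s : ℝ} (hs0 : s ≠ 0) (hs1 : s ≠ 1) :
    HasDerivAt bernoulliMomentFun
      (s / (1 - s) * exp (s / (1 - s)) - (1 - s) / s * exp ((1 - s) / s)) s := by
  have h1s : 1 - s ≠ 0 := sub_ne_zero.mpr hs1.symm
  have hid := hasDerivAt_id s
  have hA := (hid.const_sub 1).mul (hid.div (hid.const_sub 1) h1s).exp
  have hB := hid.mul ((hid.const_sub 1).div hid hs0).exp
  refine (hA.add hB).congr_deriv ?_
  simp only [id_eq, Pi.div_apply]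
  field_simp
  ring

theorem antitoneOn : AntitoneOn bernoulliMomentFun (Ioc 0 (1 / 2)) := by
  have hderiv : ∀ s ∈ Ioc (0 : ℝ) (1 / 2), HasDerivAt bernoulliMomentFun
      (s / (1 - s) * exp (s / (1 - s)) - (1 - s) / s * exp ((1 - s) / s)) s :=
    fun s hs => hasDerivAt hs.1.ne' (by linarith [hs.2])
  apply antitoneOn_of_deriv_nonpos (convex_Ioc 0 (1 / 2))
  · exact fun s hs => (hderiv s hs).continuousAt.continuousWithinAt
  · rw [interior_Ioc]
    exact fun s hs => (hderiv s (Ioo_subset_Ioc_self hs)).differentiableAt.differentiableWithinAt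
  · rw [interior_Ioc]
    intro s ⟨hs0, hs⟩
    rw [(hderiv s ⟨hs0, hs.le⟩).deriv, sub_nonpos]
    have h1s : 0 < 1 - s := by linarith
    apply mul_exp_le_mul_exp (by positivity)
    rw [div_le_div_iff₀ h1s hs0]
    nlinarith

end bernoulliMomentFun

theorem bernoulli_moment_function_bounded (u : ℝ) (hu0 : 0 < u) (hu : u < 1/2) :
    ∀ s ∈ Set.Ioo u (1 - u),
      (1 - s) * Real.exp (s / (1 - s)) + s * Real.exp ((1 - s) / s)
        ≤ (1 - u) * Real.exp (u / (1 - u)) + u * Real.exp ((1 - u) / u) := by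
  intro s ⟨hus, hsu⟩
  change bernoulliMomentFun s ≤ bernoulliMomentFun u
  have hmin : bernoulliMomentFun (min s (1 - s)) = bernoulliMomentFun s := by
    rcases min_choice s (1 - s) with h | h <;> simp only [h, bernoulliMomentFun.one_sub]
  rw [← hmin]
  have hu_mem : u ∈ Ioc 0 (1 / 2) := ⟨hu0, hu.le⟩
  have hmin_mem : min s (1 - s) ∈ Ioc 0 (1 / 2) :=
    ⟨lt_min (by linarith) (by linarith),
      min_le_iff.mpr ((le_total s (1 / 2)).imp id fun h => by linarith)⟩
  exact bernoulliMomentFun.antitoneOn hu_mem hmin_mem (le_min hus.le (by linarith))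
end

section
/- Let S be a random variable whose distribution is a finite mixture of Bernoulli distributions: P(S = 1) = Σ_{h=1}^H φ_h s^{(h)} and P(S = 0) = Σ_{h=1}^H φ_h (1 - s^{(h)}), where φ_h > 0, Σφ_h = 1, and u < s^{(h)} < 1-u for all h, with 0 < u < 1/2. Let μ = E[S]. Then E[exp((S - μ)^2 / Var(S))] ≤ (1-u)·exp(u/(1-u)) + u·exp((1-u)/u). -/
/-! For `S` with values in `{0, 1}` and mean `m`, the expectation equals
`(1 - m) exp (m / (1 - m)) + m exp ((1 - m) / m) = g (1 - m) + g m`, where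
`g x = x exp ((1 - x) / x)` is convex on `(0, ∞)` because `g'' x = exp ((1 - x) / x) / x ^ 3`.
So the expectation is a convex function of `m`, invariant under `m ↦ 1 - m`, and on `[u, 1 - u]`
it is largest at the endpoints. The mixture mean lies in `(u, 1 - u)`, being a convex combination
of the `s h`. -/

open MeasureTheory Real Finset

theorem hasDerivAt_one_sub_div_self {x : ℝ} (hx : x ≠ 0) :
    HasDerivAt (fun x => (1 - x) / x) (-(x ^ 2)⁻¹) x :=
  (((hasDerivAt_id' x).const_sub 1).div (hasDerivAt_id' x) hx).congr_deriv (by field_simp; ring)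

theorem convexOn_mul_exp_one_sub_div :
    ConvexOn ℝ (Set.Ioi 0) fun x : ℝ => x * exp ((1 - x) / x) := by
  have hg' : ∀ x ∈ Set.Ioi (0 : ℝ), HasDerivAt (fun x => x * exp ((1 - x) / x))
      (exp ((1 - x) / x) * (1 - x⁻¹)) x := fun x hx =>
    ((hasDerivAt_id' x).mul (hasDerivAt_one_sub_div_self hx.ne').exp).congr_deriv
      (by field_simp; ring)
  have hg'' : ∀ x ∈ Set.Ioi (0 : ℝ), HasDerivAt (fun x => exp ((1 - x) / x) * (1 - x⁻¹))
      (exp ((1 - x) / x) / x ^ 3) x := fun x hx =>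
    ((hasDerivAt_one_sub_div_self hx.ne').exp.mul ((hasDerivAt_inv hx.ne').const_sub 1)).congr_deriv
      (by field_simp; ring)
  refine convexOn_of_hasDerivWithinAt2_nonneg (convex_Ioi 0)
    (fun x hx => (hg' x hx).continuousAt.continuousWithinAt)
    (fun x hx => (hg' x (interior_subset hx)).hasDerivWithinAt)
    (fun x hx => (hg'' x (interior_subset hx)).hasDerivWithinAt) fun x hx => ?_
  have hx : 0 < x := interior_subset hx
  positivity

noncomputable def bernoulliSqExpMoment (p : ℝ) : ℝ :=
  (1 - p) * exp (p / (1 - p)) + p * exp ((1 - p) / p)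

theorem bernoulliSqExpMoment_one_sub (p : ℝ) :
    bernoulliSqExpMoment (1 - p) = bernoulliSqExpMoment p := by
  simp only [bernoulliSqExpMoment, sub_sub_cancel]; ring

theorem convexOn_bernoulliSqExpMoment : ConvexOn ℝ (Set.Ioo 0 1) bernoulliSqExpMoment := by
  have hg := convexOn_mul_exp_one_sub_div
  have h₁ : ConvexOn ℝ (Set.Ioo 0 1) fun p : ℝ => (1 - p) * exp (p / (1 - p)) := by
    refine ((hg.comp_affineMap (AffineMap.lineMap 1 0)).subset ?_ (convex_Ioo 0 1)).congr ?_
    · intro p hp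
      simp [AffineMap.lineMap_apply_ring, hp.2]
    · intro p _
      simp [AffineMap.lineMap_apply_ring]
  exact h₁.add (hg.subset Set.Ioo_subset_Ioi_self (convex_Ioo 0 1))

theorem bernoulliSqExpMoment_le {u p : ℝ} (hu : 0 < u) (hp : p ∈ Set.Icc u (1 - u)) :
    bernoulliSqExpMoment p ≤ bernoulliSqExpMoment u := by
  have hu1 : u < 1 := by linarith [hp.1, hp.2]
  have hseg : p ∈ segment ℝ u (1 - u) := by
    rwa [segment_eq_Icc (by linarith [hp.1, hp.2])]
  have := convexOn_bernoulliSqExpMoment.le_on_segment ⟨hu, hu1⟩ ⟨by linarith, by linarith⟩ hseg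
  rwa [bernoulliSqExpMoment_one_sub, max_self] at this

theorem integral_comp_of_forall_eq_zero_or_one {Ω : Type*} [MeasurableSpace Ω] {μ : Measure Ω}
    [IsProbabilityMeasure μ] {S : Ω → ℝ} (hS : Measurable S) (h01 : ∀ ω, S ω = 0 ∨ S ω = 1)
    (f : ℝ → ℝ) :
    ∫ ω, f (S ω) ∂μ = (1 - μ.real {ω | S ω = 1}) * f 0 + μ.real {ω | S ω = 1} * f 1 := by
  have hA : MeasurableSet {ω | S ω = 1} := hS (measurableSet_singleton 1)
  have hf : (fun ω => f (S ω)) = fun ω => f 0 + (f 1 - f 0) * {ω | S ω = 1}.indicator 1 ω := by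
    funext ω
    rcases h01 ω with h | h <;> simp [Set.indicator, h]
  rw [hf, integral_add (integrable_const _) (((integrable_const 1).indicator hA).const_mul _),
    integral_const, integral_const_mul, integral_indicator_one hA]
  simp only [probReal_univ, smul_eq_mul, one_mul]
  ring

theorem mixture_bernoulli_subgaussian_bound_general
    {Ω : Type*} [MeasurableSpace Ω] (μ : Measure Ω) [IsProbabilityMeasure μ]
    (S : Ω → ℝ) (hS : Measurable S) (H : ℕ) (φ s : Fin H → ℝ) (u : ℝ)
    (hu0 : 0 < u)
    (hφ : ∀ h, 0 < φ h) (hφsum : ∑ h, φ h = 1)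
    (hs : ∀ h, u < s h ∧ s h < 1 - u)
    (h01 : ∀ ω, S ω = 0 ∨ S ω = 1)
    (h1 : μ {ω | S ω = 1} = ENNReal.ofReal (∑ h, φ h * s h)) :
    ∫ ω, Real.exp ((S ω - ∑ h, φ h * s h)^2
        / ((∑ h, φ h * s h) * (1 - ∑ h, φ h * s h))) ∂μ
      ≤ (1 - u) * Real.exp (u / (1 - u)) + u * Real.exp ((1 - u) / u) := by
  set m := ∑ h, φ h * s h
  have hm : m ∈ Set.Ioo u (1 - u) :=
    (convex_Ioo u (1 - u)).sum_mem (fun h _ => (hφ h).le) hφsum fun h _ => hs h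
  have hm0 : 0 < m := hu0.trans hm.1
  have hm1 : 0 < 1 - m := by linarith [hm.2]
  rw [integral_comp_of_forall_eq_zero_or_one hS h01 fun x => exp ((x - m) ^ 2 / (m * (1 - m))),
    measureReal_def, h1, ENNReal.toReal_ofReal hm0.le]
  calc _ = bernoulliSqExpMoment m := by
        simp only [bernoulliSqExpMoment]
        congr 3 <;> field_simp; ring
    _ ≤ bernoulliSqExpMoment u := bernoulliSqExpMoment_le hu0 (Set.Ioo_subset_Icc_self hm)

theorem mixture_bernoulli_subgaussian_bound
    {Ω : Type*} [MeasurableSpace Ω] (μ : Measure Ω) [IsProbabilityMeasure μ]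
    (S : Ω → ℝ) (hS : Measurable S) (H : ℕ) (φ s : Fin H → ℝ) (u : ℝ)
    (hu0 : 0 < u) (hu : u < 1/2)
    (hφ : ∀ h, 0 < φ h) (hφsum : ∑ h, φ h = 1)
    (hs : ∀ h, u < s h ∧ s h < 1 - u)
    (h01 : ∀ ω, S ω = 0 ∨ S ω = 1)
    (h1 : μ {ω | S ω = 1} = ENNReal.ofReal (∑ h, φ h * s h)) :
    ∫ ω, Real.exp ((S ω - ∑ h, φ h * s h)^2
        / ((∑ h, φ h * s h) * (1 - ∑ h, φ h * s h))) ∂μ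
      ≤ (1 - u) * Real.exp (u / (1 - u)) + u * Real.exp ((1 - u) / u) :=
  mixture_bernoulli_subgaussian_bound_general μ S hS H φ s u hu0 hφ hφsum hs h01 h1
end
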